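/- (Weighted div-curl lemma) Let λ : ℝ³ → ℝ be a smooth function with λ(x) ≥ 1 for all x, satisfying |∇λ(x)| ≤ C₀ λ(x) for all x ∈ ℝ³ for some constant C₀. Then for every smooth divergence-free vector field v on ℝ³ with √λ ∇v ∈ L²(ℝ³) and √λ v ∈ L²(ℝ³), one has ‖√λ ∇v‖²_{L²(ℝ³)} ≤ C (‖√λ curl v‖²_{L²(ℝ³)} + ‖√λ v‖²_{L²(ℝ³)}), where C depends only on C₀. -/

import Mathlib

open MeasureTheory Real Set
open scoped ENNReal NNReal BigOperators Topology

noncomputable section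

/-- Spatial slice `ℝ³`. -/
abbrev Sp : Type := EuclideanSpace ℝ (Fin 3)

/-- Build a point of `ℝ³` from its three coordinates. -/
def pt3 (a b c : ℝ) : Sp := (WithLp.equiv 2 (Fin 3 → ℝ)).symm ![a, b, c]

variable {F : Type*} [NormedAddCommGroup F] [NormedSpace ℝ F]

/-- Spatial partial derivative `∂ᵢ` for functions on `ℝ³`. -/
def pd (i : Fin 3) (f : Sp → F) : Sp → F :=
  fun x => fderiv ℝ f x (EuclideanSpace.single i 1)

/-- Multi-index partial derivative `∂^β`. -/
def mpd (β : Fin 3 → ℕ) (f : Sp → F) : Sp → F :=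
  (pd 0)^[β 0] ((pd 1)^[β 1] ((pd 2)^[β 2] f))

/-- The totally antisymmetric Levi-Civita symbol on `Fin 3`. -/
def lev (i j k : Fin 3) : ℝ :=
  if (i, j, k) = (0, 1, 2) ∨ (i, j, k) = (1, 2, 0) ∨ (i, j, k) = (2, 0, 1) then 1
  else if (i, j, k) = (0, 2, 1) ∨ (i, j, k) = (2, 1, 0) ∨ (i, j, k) = (1, 0, 2) then -1
  else 0

/-- curl of a vector field on `ℝ³`:  `(curl f)ₖ = ε_{ijk} ∂_i f^j`. -/
def curl3 (v : Sp → Sp) : Sp → Sp :=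
  fun x => (WithLp.equiv 2 (Fin 3 → ℝ)).symm
    (fun k => ∑ i, ∑ j, lev i j k * pd i (fun y => v y j) x)

/-- divergence of a vector field on `ℝ³`. -/
def div3 (v : Sp → Sp) : Sp → ℝ := fun x => ∑ i, pd i (fun y => v y i) x

/-- time derivative `∂_t` for functions on spacetime `ℝ × ℝ³`. -/
def pt (f : ℝ × Sp → F) : ℝ × Sp → F := fun q => deriv (fun s => f (s, q.2)) q.1

/-- spatial derivative `∂_{xᵢ}` for functions on spacetime. -/
def pX (i : Fin 3) (f : ℝ × Sp → F) : ℝ × Sp → F := fun q => pd i (fun y => f (q.1, y)) q.2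

/-- spatial gradient `∇p` of a scalar function on spacetime. -/
def grad3 (p : ℝ × Sp → ℝ) : ℝ × Sp → Sp :=
  fun q => (WithLp.equiv 2 (Fin 3 → ℝ)).symm (fun i => pX i p q)

/-- convection term `(z · ∇) w`. -/
def conv (z w : ℝ × Sp → Sp) : ℝ × Sp → Sp :=
  fun q => (WithLp.equiv 2 (Fin 3 → ℝ)).symm
    (fun k => ∑ i, z q i * pX i (fun r => w r k) q)

/-- The ideal incompressible MHD system in Elsässer variables on `ℝ_t × ℝ³_x`, with a
background magnetic field `B₀ = e₃`:
`∂_t z₊ − ∂_{x₃} z₊ = −∇p − (z₋·∇)z₊`, `∂_t z₋ + ∂_{x₃} z₋ = −∇p − (z₊·∇)z₋`,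
`div z₊ = div z₋ = 0`, the pressure being given by the Newtonian potential solving
`−Δp = ∂_i z₋^j ∂_j z₊^i`. -/
structure IsMHDSolution (zp zm : ℝ × Sp → Sp) (p : ℝ × Sp → ℝ) : Prop where
  smooth_zp : ContDiff ℝ (⊤ : ℕ∞) zp
  smooth_zm : ContDiff ℝ (⊤ : ℕ∞) zm
  smooth_p : ContDiff ℝ (⊤ : ℕ∞) p
  eq_zp : ∀ q : ℝ × Sp, pt zp q - pX 2 zp q = -(grad3 p q) - conv zm zp q
  eq_zm : ∀ q : ℝ × Sp, pt zm q + pX 2 zm q = -(grad3 p q) - conv zp zm q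
  div_zp : ∀ q : ℝ × Sp, div3 (fun y => zp (q.1, y)) q.2 = 0
  div_zm : ∀ q : ℝ × Sp, div3 (fun y => zm (q.1, y)) q.2 = 0
  newtonian : ∀ (t : ℝ) (x : Sp), p (t, x) =
    (1 / (4 * π)) * ∫ y : Sp, ‖x - y‖⁻¹ *
      ∑ i, ∑ j, pd i (fun u => zm (t, u) j) y * pd j (fun u => zp (t, u) i) y

/-- Weighted L² energy of the `k`-th derivatives on a time slice, with squared weight
`(1+|x₃ − b|²)^(1+δ)`. -/
def wSliceE (δ b : ℝ) (k : ℕ) (g : Sp → Sp) : ℝ≥0∞ :=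
  ∫⁻ x : Sp, ENNReal.ofReal ((1 + |x 2 - b| ^ 2) ^ (1 + δ) * ‖iteratedFDeriv ℝ k g x‖ ^ 2)

/-- `E^{(k)}_+(t)`-type energy for `z₊`, with weight `⟨u₋⟩^{2ω} = (1+|x₃+(t+a)|²)^{1+δ}`. -/
def energyP (δ a : ℝ) (k : ℕ) (f : ℝ × Sp → Sp) (t : ℝ) : ℝ≥0∞ :=
  wSliceE δ (-(t + a)) k (fun y => f (t, y))

/-- `E^{(k)}_-(t)`-type energy for `z₋`, with weight `⟨u₊⟩^{2ω} = (1+|x₃−(t+a)|²)^{1+δ}`. -/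
def energyM (δ a : ℝ) (k : ℕ) (f : ℝ × Sp → Sp) (t : ℝ) : ℝ≥0∞ :=
  wSliceE δ (t + a) k (fun y => f (t, y))

/-- Total initial weighted energy `𝓔^{N*}_+(0)` of `z₊`. -/
def EInitP (δ a : ℝ) (N : ℕ) (f : ℝ × Sp → Sp) : ℝ≥0∞ :=
  ∑ k ∈ Finset.range (N + 2), energyP δ a k f 0

/-- Total initial weighted energy `𝓔^{N*}_-(0)` of `z₋`. -/
def EInitM (δ a : ℝ) (N : ℕ) (f : ℝ × Sp → Sp) : ℝ≥0∞ :=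
  ∑ k ∈ Finset.range (N + 2), energyM δ a k f 0

/-- Total initial weighted energy `𝓔^{N*}(0)` expressed on initial data. -/
def EInit0 (δ a : ℝ) (N : ℕ) (zp0 zm0 : Sp → Sp) : ℝ≥0∞ :=
  ∑ k ∈ Finset.range (N + 2), (wSliceE δ (-a) k zp0 + wSliceE δ a k zm0)

/-- Flux of `g` through the characteristic hypersurface `C^{+,t}_{u₊} = {x₃ = u₊ + τ}`,
with weight `⟨u₋⟩^{2ω}` and surface measure `dσ₊ = √2 dx₁dx₂dτ`. -/
def fluxP (δ a : ℝ) (g : ℝ × Sp → Sp) (t u : ℝ) : ℝ≥0∞ :=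
  ∫⁻ τ in Icc (0 : ℝ) t, ∫⁻ y : ℝ × ℝ,
    ENNReal.ofReal (Real.sqrt 2 * (1 + |(u + τ) + (τ + a)| ^ 2) ^ (1 + δ) *
      ‖g (τ, pt3 y.1 y.2 (u + τ))‖ ^ 2)

/-- Flux of `g` through the characteristic hypersurface `C^{−,t}_{u₋} = {x₃ = u₋ − τ}`,
with weight `⟨u₊⟩^{2ω}` and surface measure `dσ₋ = √2 dx₁dx₂dτ`. -/
def fluxM (δ a : ℝ) (g : ℝ × Sp → Sp) (t u : ℝ) : ℝ≥0∞ :=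
  ∫⁻ τ in Icc (0 : ℝ) t, ∫⁻ y : ℝ × ℝ,
    ENNReal.ofReal (Real.sqrt 2 * (1 + |(u - τ) - (τ + a)| ^ 2) ^ (1 + δ) *
      ‖g (τ, pt3 y.1 y.2 (u - τ))‖ ^ 2)

/-- `j^{(α)} = curl ∂^α z` (spatial curl on each time slice). -/
def jA (α : Fin 3 → ℕ) (f : ℝ × Sp → Sp) : ℝ × Sp → Sp :=
  fun q => curl3 (mpd α (fun y => f (q.1, y))) q.2

/-- The nonlinearity `∇p + (z₋·∇)z₊` in the equation for `z₊`. -/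
def NLp (zp zm : ℝ × Sp → Sp) (p : ℝ × Sp → ℝ) : ℝ × Sp → Sp :=
  fun q => grad3 p q + conv zm zp q

/-- The nonlinearity `∇p + (z₊·∇)z₋` in the equation for `z₋`. -/
def NLm (zp zm : ℝ × Sp → Sp) (p : ℝ × Sp → ℝ) : ℝ × Sp → Sp :=
  fun q => grad3 p q + conv zp zm q

/-- Future scattering field of `z₊` on `𝓕₊`, in the coordinates `(x₁,x₂,u₋)`. -/
def scatPfut (zp zm : ℝ × Sp → Sp) (p : ℝ × Sp → ℝ) (x1 x2 u : ℝ) : Sp :=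
  zp (0, pt3 x1 x2 u) - ∫ τ in Ioi (0 : ℝ), NLp zp zm p (τ, pt3 x1 x2 (u - τ))

/-- Future scattering field of `z₋` on `𝓕₋`, in the coordinates `(x₁,x₂,u₊)`. -/
def scatMfut (zp zm : ℝ × Sp → Sp) (p : ℝ × Sp → ℝ) (x1 x2 u : ℝ) : Sp :=
  zm (0, pt3 x1 x2 u) - ∫ τ in Ioi (0 : ℝ), NLm zp zm p (τ, pt3 x1 x2 (u + τ))

/-- Past scattering field of `z₊` on `𝓟₊` (note `∫₀^{−∞} = −∫_{Iio 0}`). -/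
def scatPpast (zp zm : ℝ × Sp → Sp) (p : ℝ × Sp → ℝ) (x1 x2 u : ℝ) : Sp :=
  zp (0, pt3 x1 x2 u) + ∫ τ in Iio (0 : ℝ), NLp zp zm p (τ, pt3 x1 x2 (u - τ))

/-- Past scattering field of `z₋` on `𝓟₋`. -/
def scatMpast (zp zm : ℝ × Sp → Sp) (p : ℝ × Sp → ℝ) (x1 x2 u : ℝ) : Sp :=
  zm (0, pt3 x1 x2 u) + ∫ τ in Iio (0 : ℝ), NLm zp zm p (τ, pt3 x1 x2 (u + τ))

/-- The weight `⟨·⟩ = (1+|x₃−b|²)^{1/2}`. -/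
def wgt (b : ℝ) (x : Sp) : ℝ := Real.sqrt (1 + |x 2 - b| ^ 2)


namespace WDC

lemma diffOf {f : Sp → F} (hf : ContDiff ℝ (⊤ : ℕ∞) f) : Differentiable ℝ f :=
  hf.differentiable (by simp)

lemma contDiff_fderiv {f : Sp → F} (hf : ContDiff ℝ (⊤ : ℕ∞) f) :
    ContDiff ℝ (⊤ : ℕ∞) (fderiv ℝ f) :=
  hf.fderiv_right (by exact_mod_cast le_top)

lemma contDiff_pd {f : Sp → F} (hf : ContDiff ℝ (⊤ : ℕ∞) f) (i : Fin 3) :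
    ContDiff ℝ (⊤ : ℕ∞) (pd i f) :=
  (contDiff_fderiv hf).clm_apply contDiff_const

lemma contDiff_coord {v : Sp → Sp} (hv : ContDiff ℝ (⊤ : ℕ∞) v) (j : Fin 3) :
    ContDiff ℝ (⊤ : ℕ∞) (fun y => v y j) :=
  (EuclideanSpace.proj (𝕜 := ℝ) (ι := Fin 3) j).contDiff.comp hv

lemma coord_abs_le_norm (w : Sp) (j : Fin 3) : |w j| ≤ ‖w‖ := by
  rw [EuclideanSpace.norm_eq, ← Real.sqrt_sq_eq_abs]
  apply Real.sqrt_le_sqrt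
  have : (w j) ^ 2 = ‖w j‖ ^ 2 := by simp [Real.norm_eq_abs, sq_abs]
  rw [this]
  exact Finset.single_le_sum (f := fun i => ‖w i‖ ^ 2) (fun i _ => by positivity)
    (Finset.mem_univ j)

lemma norm_sq_eq (w : Sp) : ‖w‖ ^ 2 = ∑ i, (w i) ^ 2 := by
  rw [EuclideanSpace.norm_eq, Real.sq_sqrt (by positivity)]
  simp [Real.norm_eq_abs, sq_abs]

lemma sum_smul_single_apply (c : Fin 3 → ℝ) (j : Fin 3) :
    (∑ i, c i • EuclideanSpace.single i (1:ℝ) : Sp) j = c j := by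
  fin_cases j <;>
    simp [Fin.sum_univ_three, PiLp.add_apply, PiLp.smul_apply, EuclideanSpace.single_apply]

lemma eq_sum_single (u : Sp) : u = ∑ i, u i • EuclideanSpace.single i (1:ℝ) := by
  have := (EuclideanSpace.basisFun (Fin 3) ℝ).sum_repr u
  simp only [EuclideanSpace.basisFun_apply, EuclideanSpace.basisFun_repr] at this
  exact this.symm

lemma opNorm_sq_le_frob (T : Sp →L[ℝ] Sp) :
    ‖T‖ ^ 2 ≤ ∑ i, ∑ j, (T (EuclideanSpace.single i (1:ℝ)) j) ^ 2 := by
  set Fr : ℝ := ∑ i, ∑ j, (T (EuclideanSpace.single i (1:ℝ)) j) ^ 2 with hFr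
  have hFr0 : 0 ≤ Fr := by positivity
  have hb : ‖T‖ ≤ Real.sqrt Fr := by
    apply ContinuousLinearMap.opNorm_le_bound _ (Real.sqrt_nonneg _)
    intro u
    have hu : T u = ∑ i, u i • T (EuclideanSpace.single i (1:ℝ)) := by
      conv_lhs => rw [eq_sum_single u]
      rw [map_sum]
      simp [_root_.map_smul]
    calc ‖T u‖ = ‖∑ i, u i • T (EuclideanSpace.single i (1:ℝ))‖ := by rw [hu]
      _ ≤ ∑ i, ‖u i • T (EuclideanSpace.single i (1:ℝ))‖ := norm_sum_le _ _
      _ = ∑ i, |u i| * ‖T (EuclideanSpace.single i (1:ℝ))‖ := by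
          simp [norm_smul, Real.norm_eq_abs]
      _ ≤ Real.sqrt (∑ i, (u i)^2) * Real.sqrt (∑ i, ‖T (EuclideanSpace.single i (1:ℝ))‖^2) := by
          have h := Finset.sum_mul_sq_le_sq_mul_sq Finset.univ
            (fun i => |u i|) (fun i => ‖T (EuclideanSpace.single i (1:ℝ))‖)
          have h1 : (0:ℝ) ≤ ∑ i, |u i| * ‖T (EuclideanSpace.single i (1:ℝ))‖ := by positivity
          rw [← Real.sqrt_mul_self h1]
          rw [← Real.sqrt_mul (by positivity)]
          apply Real.sqrt_le_sqrt
          calc (∑ i, |u i| * ‖T (EuclideanSpace.single i (1:ℝ))‖) *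
                (∑ i, |u i| * ‖T (EuclideanSpace.single i (1:ℝ))‖)
              = (∑ i, |u i| * ‖T (EuclideanSpace.single i (1:ℝ))‖)^2 := (sq _).symm
            _ ≤ (∑ i, |u i|^2) * ∑ i, ‖T (EuclideanSpace.single i (1:ℝ))‖^2 := h
            _ = (∑ i, (u i)^2) * ∑ i, ‖T (EuclideanSpace.single i (1:ℝ))‖^2 := by simp [sq_abs]
      _ = ‖u‖ * Real.sqrt Fr := by
          rw [EuclideanSpace.norm_eq]
          congr 2
          · simp [Real.norm_eq_abs, sq_abs]
          · rw [hFr]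
            congr 1
            funext i
            rw [norm_sq_eq]
      _ = Real.sqrt Fr * ‖u‖ := mul_comm _ _
  calc ‖T‖^2 ≤ (Real.sqrt Fr)^2 := by
        apply pow_le_pow_left₀ (norm_nonneg _) hb
    _ = Fr := Real.sq_sqrt hFr0

lemma lev000 : lev 0 0 0 = 0 := rfl
lemma lev001 : lev 0 0 1 = 0 := rfl
lemma lev002 : lev 0 0 2 = 0 := rfl
lemma lev010 : lev 0 1 0 = 0 := rfl
lemma lev011 : lev 0 1 1 = 0 := rfl
lemma lev012 : lev 0 1 2 = 1 := rfl
lemma lev020 : lev 0 2 0 = 0 := rfl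
lemma lev021 : lev 0 2 1 = (-1) := rfl
lemma lev022 : lev 0 2 2 = 0 := rfl
lemma lev100 : lev 1 0 0 = 0 := rfl
lemma lev101 : lev 1 0 1 = 0 := rfl
lemma lev102 : lev 1 0 2 = (-1) := rfl
lemma lev110 : lev 1 1 0 = 0 := rfl
lemma lev111 : lev 1 1 1 = 0 := rfl
lemma lev112 : lev 1 1 2 = 0 := rfl
lemma lev120 : lev 1 2 0 = 1 := rfl
lemma lev121 : lev 1 2 1 = 0 := rfl
lemma lev122 : lev 1 2 2 = 0 := rfl
lemma lev200 : lev 2 0 0 = 0 := rfl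
lemma lev201 : lev 2 0 1 = 1 := rfl
lemma lev202 : lev 2 0 2 = 0 := rfl
lemma lev210 : lev 2 1 0 = (-1) := rfl
lemma lev211 : lev 2 1 1 = 0 := rfl
lemma lev212 : lev 2 1 2 = 0 := rfl
lemma lev220 : lev 2 2 0 = 0 := rfl
lemma lev221 : lev 2 2 1 = 0 := rfl
lemma lev222 : lev 2 2 2 = 0 := rfl

lemma lev_identity (a : Fin 3 → Fin 3 → ℝ) :
    ∑ k, (∑ i, ∑ j, lev i j k * a i j) ^ 2 =
      (∑ i, ∑ j, (a i j) ^ 2) - ∑ i, ∑ j, a i j * a j i := by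
  simp only [Fin.sum_univ_three, lev000, lev001, lev002, lev010, lev011, lev012, lev020, lev021, lev022, lev100, lev101, lev102, lev110, lev111, lev112, lev120, lev121, lev122, lev200, lev201, lev202, lev210, lev211, lev212, lev220, lev221, lev222]
  ring


lemma pd_coord {v : Sp → Sp} (hv : Differentiable ℝ v) (i j : Fin 3) (x : Sp) :
    pd i (fun y => v y j) x = fderiv ℝ v x (EuclideanSpace.single i 1) j := by
  have h : fderiv ℝ (fun y => (EuclideanSpace.proj (𝕜 := ℝ) (ι := Fin 3) j) (v y)) x
      = (EuclideanSpace.proj (𝕜 := ℝ) (ι := Fin 3) j).comp (fderiv ℝ v x) :=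
    ((EuclideanSpace.proj (𝕜 := ℝ) (ι := Fin 3) j).hasFDerivAt.comp x
      (hv x).hasFDerivAt).fderiv
  have h2 : pd i (fun y => v y j) x
      = fderiv ℝ (fun y => (EuclideanSpace.proj (𝕜 := ℝ) (ι := Fin 3) j) (v y)) x
          (EuclideanSpace.single i 1) := rfl
  rw [h2, h]
  rfl

lemma pd_mul {f g : Sp → ℝ} {x : Sp} (hf : DifferentiableAt ℝ f x)
    (hg : DifferentiableAt ℝ g x) (i : Fin 3) :
    pd i (fun y => f y * g y) x = pd i f x * g x + f x * pd i g x := by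
  unfold pd
  rw [fderiv_fun_mul hf hg]
  simp [smul_eq_mul]
  ring

lemma pd_sum {ι : Type*} (s : Finset ι) {g : ι → Sp → ℝ} {x : Sp}
    (hg : ∀ j ∈ s, DifferentiableAt ℝ (g j) x) (i : Fin 3) :
    pd i (fun y => ∑ j ∈ s, g j y) x = ∑ j ∈ s, pd i (g j) x := by
  unfold pd
  rw [fderiv_fun_sum hg]
  simp

lemma pd_pd_comm {g : Sp → ℝ} (hg : ContDiff ℝ (⊤ : ℕ∞) g) (i j : Fin 3) (x : Sp) :
    pd i (pd j g) x = pd j (pd i g) x := by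
  have hg' : ∀ y, HasFDerivAt g (fderiv ℝ g y) y := fun y =>
    ((diffOf hg) y).hasFDerivAt
  have hg'' : HasFDerivAt (fderiv ℝ g) (fderiv ℝ (fderiv ℝ g) x) x :=
    ((diffOf (contDiff_fderiv hg)) x).hasFDerivAt
  have key : ∀ a b : Sp, fderiv ℝ (fderiv ℝ g) x a b = fderiv ℝ (fderiv ℝ g) x b a :=
    second_derivative_symmetric hg' hg''
  have hap : ∀ c : Sp, pd i (fun y => fderiv ℝ g y c) x = fderiv ℝ (fderiv ℝ g) x
      (EuclideanSpace.single i 1) c := by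
    intro c
    have h : fderiv ℝ (fun y => (ContinuousLinearMap.apply ℝ ℝ c) (fderiv ℝ g y)) x
        = (ContinuousLinearMap.apply ℝ ℝ c).comp (fderiv ℝ (fderiv ℝ g) x) :=
      ((ContinuousLinearMap.apply ℝ ℝ c).hasFDerivAt.comp x hg'').fderiv
    have h2 : pd i (fun y => fderiv ℝ g y c) x
        = fderiv ℝ (fun y => (ContinuousLinearMap.apply ℝ ℝ c) (fderiv ℝ g y)) x
          (EuclideanSpace.single i 1) := rfl
    rw [h2, h]; rfl
  have hap' : ∀ c : Sp, pd j (fun y => fderiv ℝ g y c) x = fderiv ℝ (fderiv ℝ g) x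
      (EuclideanSpace.single j 1) c := by
    intro c
    have h : fderiv ℝ (fun y => (ContinuousLinearMap.apply ℝ ℝ c) (fderiv ℝ g y)) x
        = (ContinuousLinearMap.apply ℝ ℝ c).comp (fderiv ℝ (fderiv ℝ g) x) :=
      ((ContinuousLinearMap.apply ℝ ℝ c).hasFDerivAt.comp x hg'').fderiv
    have h2 : pd j (fun y => fderiv ℝ g y c) x
        = fderiv ℝ (fun y => (ContinuousLinearMap.apply ℝ ℝ c) (fderiv ℝ g y)) x
          (EuclideanSpace.single j 1) := rfl
    rw [h2, h]; rfl
  calc pd i (pd j g) x = fderiv ℝ (fderiv ℝ g) x (EuclideanSpace.single i 1)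
        (EuclideanSpace.single j 1) := hap _
    _ = fderiv ℝ (fderiv ℝ g) x (EuclideanSpace.single j 1)
        (EuclideanSpace.single i 1) := key _ _
    _ = pd j (pd i g) x := (hap' _).symm

lemma curl3_apply (v : Sp → Sp) (x : Sp) (k : Fin 3) :
    curl3 v x k = ∑ i, ∑ j, lev i j k * pd i (fun y => v y j) x := rfl

lemma pd_congr {f g : Sp → ℝ} (h : ∀ y, f y = g y) (i : Fin 3) (x : Sp) :
    pd i f x = pd i g x := by
  have : f = g := funext h
  rw [this]

lemma pd_const (c : ℝ) (i : Fin 3) (x : Sp) : pd i (fun _ => c) x = 0 := by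
  unfold pd
  rw [fderiv_fun_const]
  simp


lemma glob_ibp {χ g : Sp → ℝ} (hχ : ContDiff ℝ (⊤ : ℕ∞) χ) (hcs : HasCompactSupport χ)
    (hg : ContDiff ℝ (⊤ : ℕ∞) g) (i : Fin 3) :
    ∫ x : Sp, χ x * pd i g x = - ∫ x : Sp, pd i χ x * g x := by
  have hcsd : HasCompactSupport (fun x => fderiv ℝ χ x (EuclideanSpace.single i (1:ℝ))) := by
    have h0 : (fun (T : Sp →L[ℝ] ℝ) => T (EuclideanSpace.single i (1:ℝ))) 0 = 0 := rfl
    exact (hcs.fderiv ℝ).comp_left (g := fun (T : Sp →L[ℝ] ℝ) =>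
      T (EuclideanSpace.single i (1:ℝ))) h0
  have hχc : Continuous χ := hχ.continuous
  have hgc : Continuous g := hg.continuous
  have hpdχc : Continuous (pd i χ) := (contDiff_pd hχ i).continuous
  have hpdgc : Continuous (pd i g) := (contDiff_pd hg i).continuous
  have h1 : Integrable (fun x : Sp => fderiv ℝ χ x (EuclideanSpace.single i (1:ℝ)) * g x) := by
    exact (hpdχc.mul hgc).integrable_of_hasCompactSupport (hcsd.mul_right)
  have h2 : Integrable (fun x : Sp => χ x * fderiv ℝ g x (EuclideanSpace.single i (1:ℝ))) := by
    have : HasCompactSupport (fun x : Sp =>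
        χ x * fderiv ℝ g x (EuclideanSpace.single i (1:ℝ))) := hcs.mul_right
    exact (hχc.mul hpdgc).integrable_of_hasCompactSupport this
  have h3 : Integrable (fun x : Sp => χ x * g x) :=
    (hχc.mul hgc).integrable_of_hasCompactSupport hcs.mul_right
  exact integral_mul_fderiv_eq_neg_fderiv_mul_of_integrable h1 h2 h3
    (fun x _ => diffOf hχ x) (fun x _ => diffOf hg x)

lemma integral_div3_eq_zero (W : Sp → Sp) (hW : ContDiff ℝ (⊤ : ℕ∞) W)
    (hWc : ∀ i, Integrable (fun x => W x i)) (hdi : Integrable (div3 W)) :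
    ∫ x : Sp, div3 W x = 0 := by
  -- bump function
  set φ : ContDiffBump (0 : Sp) := ⟨1, 2, one_pos, one_lt_two⟩ with hφ
  have φcd : ContDiff ℝ (⊤ : ℕ∞) φ := φ.contDiff
  obtain ⟨K, hK⟩ := ((contDiff_fderiv φcd).continuous).bounded_above_of_compact_support
    ((φ.hasCompactSupport).fderiv ℝ)
  have hK0 : 0 ≤ K := le_trans (norm_nonneg _) (hK 0)
  -- scaled cutoffs
  set c : ℕ → (Sp →L[ℝ] Sp) := fun n => ((n : ℝ) + 1)⁻¹ • ContinuousLinearMap.id ℝ Sp with hc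
  set χ : ℕ → Sp → ℝ := fun n x => φ (c n x) with hχdef
  have hn1 : ∀ n : ℕ, (0:ℝ) < (n:ℝ) + 1 := fun n => by positivity
  have hχcd : ∀ n, ContDiff ℝ (⊤ : ℕ∞) (χ n) := fun n => φcd.comp (c n).contDiff
  have hcx : ∀ (n : ℕ) (x : Sp), ‖c n x‖ = ((n:ℝ)+1)⁻¹ * ‖x‖ := by
    intro n x
    show ‖((n:ℝ)+1)⁻¹ • x‖ = _
    rw [norm_smul, Real.norm_eq_abs, abs_inv, abs_of_pos (hn1 n)]
  have hχcs : ∀ n, HasCompactSupport (χ n) := by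
    intro n
    apply HasCompactSupport.intro (isCompact_closedBall (0:Sp) (2*((n:ℝ)+1)))
    intro x hx
    simp only [Metric.mem_closedBall, dist_zero_right, not_le] at hx
    have : ‖c n x‖ ≥ 2 := by
      rw [hcx n x, ge_iff_le, le_inv_mul_iff₀ (hn1 n)]
      linarith
    have hx2 : c n x ∉ Function.support (φ : Sp → ℝ) := by
      rw [φ.support_eq]
      simp only [Metric.mem_ball, dist_zero_right, not_lt]
      exact this
    simpa [hχdef] using Function.notMem_support.mp hx2
  have hχ1 : ∀ (n : ℕ) (x : Sp), ‖x‖ ≤ (n:ℝ) + 1 → χ n x = 1 := by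
    intro n x hx
    apply φ.one_of_mem_closedBall
    simp only [Metric.mem_closedBall, dist_zero_right]
    rw [hcx n x, inv_mul_le_iff₀ (hn1 n)]
    show ‖x‖ ≤ ((n:ℝ)+1) * 1
    linarith
  -- derivative bound and vanishing
  have hder : ∀ n x, fderiv ℝ (χ n) x = (fderiv ℝ (φ : Sp → ℝ) (c n x)).comp (c n) := by
    intro n x
    exact (((diffOf φcd) (c n x)).hasFDerivAt.comp x (c n).hasFDerivAt).fderiv
  have hderb : ∀ n x (i : Fin 3), |pd i (χ n) x| ≤ K := by
    intro n x i
    have : pd i (χ n) x = fderiv ℝ (φ : Sp → ℝ) (c n x) (c n (EuclideanSpace.single i 1)) := by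
      unfold pd
      rw [hder n x]; rfl
    rw [this, ← Real.norm_eq_abs]
    calc ‖fderiv ℝ (φ : Sp → ℝ) (c n x) (c n (EuclideanSpace.single i 1))‖
        ≤ ‖fderiv ℝ (φ : Sp → ℝ) (c n x)‖ * ‖c n (EuclideanSpace.single i 1)‖ :=
          ContinuousLinearMap.le_opNorm _ _
      _ ≤ K * 1 := by
          apply mul_le_mul (hK _) ?_ (norm_nonneg _) hK0
          rw [hcx n _, EuclideanSpace.norm_single]
          simp only [norm_one, mul_one]
          rw [inv_le_one_iff₀]
          right; linarith [hn1 n]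
      _ = K := mul_one K
  have hdzero : ∀ (x : Sp) (i : Fin 3), ∀ n : ℕ, ‖x‖ < (n:ℝ) + 1 → pd i (χ n) x = 0 := by
    intro x i n hx
    have hev : χ n =ᶠ[nhds x] (fun _ => (1:ℝ)) := by
      have hopen : IsOpen (Metric.ball (0:Sp) ((n:ℝ)+1)) := Metric.isOpen_ball
      have hmem : x ∈ Metric.ball (0:Sp) ((n:ℝ)+1) := by
        simp only [Metric.mem_ball, dist_zero_right]; exact hx
      filter_upwards [hopen.mem_nhds hmem] with y hy
      exact hχ1 n y (le_of_lt (by simpa [Metric.mem_ball, dist_zero_right] using hy))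
    unfold pd
    rw [hev.fderiv_eq, fderiv_fun_const]
    simp
  -- components of W
  have hWic : ∀ i, ContDiff ℝ (⊤ : ℕ∞) (fun x => W x i) := fun i => contDiff_coord hW i
  have hdW : Continuous (div3 W) := by
    apply continuous_finset_sum
    intro i _
    exact (contDiff_pd (hWic i) i).continuous
  -- per-n identity
  have key : ∀ n, ∫ x : Sp, χ n x * div3 W x
      = - ∑ i : Fin 3, ∫ x : Sp, pd i (χ n) x * W x i := by
    intro n
    have h1 : ∫ x : Sp, χ n x * div3 W x
        = ∑ i : Fin 3, ∫ x : Sp, χ n x * pd i (fun y => W y i) x := by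
      rw [← integral_finset_sum]
      · congr 1; funext x
        unfold div3
        rw [Finset.mul_sum]
      · intro i _
        exact ((hχcd n).continuous.mul (contDiff_pd (hWic i) i).continuous
          ).integrable_of_hasCompactSupport (hχcs n).mul_right
    rw [h1]
    rw [← Finset.sum_neg_distrib]
    congr 1; funext i
    exact glob_ibp (hχcd n) (hχcs n) (hWic i) i
  -- limit of LHS
  have hL : Filter.Tendsto (fun n => ∫ x : Sp, χ n x * div3 W x)
      Filter.atTop (nhds (∫ x : Sp, div3 W x)) := by
    apply tendsto_integral_of_dominated_convergence (fun x => |div3 W x|)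
    · intro n
      exact ((hχcd n).continuous.mul hdW).aestronglyMeasurable
    · exact hdi.abs
    · intro n
      filter_upwards with x
      rw [Real.norm_eq_abs, abs_mul]
      have h0 := φ.nonneg (x := c n x)
      have h1 := φ.le_one (x := c n x)
      have hb : |χ n x| ≤ 1 := abs_le.mpr ⟨by simpa [hχdef] using (by linarith : (-1:ℝ) ≤ φ (c n x)), h1⟩
      exact mul_le_of_le_one_left (abs_nonneg _) hb
    · filter_upwards with x
      apply Filter.Tendsto.congr' _ tendsto_const_nhds
      filter_upwards [Filter.eventually_atTop.mpr ⟨Nat.ceil ‖x‖, fun n hn => hn⟩] with n hn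
      have : χ n x = 1 := hχ1 n x (by
        have := Nat.ceil_le.mp (le_refl (Nat.ceil ‖x‖))
        have h2 : ‖x‖ ≤ (Nat.ceil ‖x‖ : ℝ) := Nat.le_ceil _
        have h3 : (Nat.ceil ‖x‖ : ℝ) ≤ (n : ℝ) := Nat.cast_le.mpr hn
        linarith)
      rw [this, one_mul]
  -- limit of RHS terms
  have hR : ∀ i : Fin 3, Filter.Tendsto (fun n => ∫ x : Sp, pd i (χ n) x * W x i)
      Filter.atTop (nhds 0) := by
    intro i
    have h0 : (0:ℝ) = ∫ x : Sp, (0:ℝ) := by simp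
    rw [h0]
    apply tendsto_integral_of_dominated_convergence (fun x => K * |W x i|)
    · intro n
      exact ((contDiff_pd (hχcd n) i).continuous.mul (hWic i).continuous).aestronglyMeasurable
    · exact (hWc i).abs.const_mul K
    · intro n
      filter_upwards with x
      rw [Real.norm_eq_abs, abs_mul]
      exact mul_le_mul_of_nonneg_right (hderb n x i) (abs_nonneg _)
    · filter_upwards with x
      apply Filter.Tendsto.congr' _ tendsto_const_nhds
      filter_upwards [Filter.eventually_atTop.mpr ⟨Nat.ceil ‖x‖, fun n hn => hn⟩] with n hn
      have hlt : ‖x‖ < (n:ℝ) + 1 := by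
        have h2 : ‖x‖ ≤ (Nat.ceil ‖x‖ : ℝ) := Nat.le_ceil _
        have h3 : (Nat.ceil ‖x‖ : ℝ) ≤ (n : ℝ) := Nat.cast_le.mpr hn
        linarith
      rw [hdzero x i n hlt, zero_mul]
  have hRsum : Filter.Tendsto (fun n => - ∑ i : Fin 3, ∫ x : Sp, pd i (χ n) x * W x i)
      Filter.atTop (nhds 0) := by
    have : Filter.Tendsto (fun n => ∑ i : Fin 3, ∫ x : Sp, pd i (χ n) x * W x i)
        Filter.atTop (nhds (∑ _i : Fin 3, (0:ℝ))) :=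
      tendsto_finset_sum _ (fun i _ => hR i)
    simpa using this.neg
  have := hL.congr (fun n => key n)
  have h0 := tendsto_nhds_unique this hRsum
  exact h0

end WDC

open WDC

/-- **Weighted div-curl lemma.**  Let `λ ≥ 1` be smooth on `ℝ³` with `|∇λ| ≤ C₀ λ`.  Then for
every smooth divergence-free vector field `v` with `√λ ∇v ∈ L²` and `√λ v ∈ L²`, one has
`‖√λ ∇v‖² ≤ C (‖√λ curl v‖² + ‖√λ v‖²)`, where `C` depends only on `C₀`. -/
theorem weighted_div_curl_lemma (C₀ : ℝ) (hC₀ : 0 < C₀) :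
    ∃ C : ℝ, 0 < C ∧
      ∀ lam : Sp → ℝ, ContDiff ℝ (⊤ : ℕ∞) lam → (∀ x, 1 ≤ lam x) →
        (∀ x, ‖fderiv ℝ lam x‖ ≤ C₀ * lam x) →
      ∀ v : Sp → Sp, ContDiff ℝ (⊤ : ℕ∞) v → (∀ x, div3 v x = 0) →
        Integrable (fun x : Sp => lam x * ‖fderiv ℝ v x‖ ^ 2) →
        Integrable (fun x : Sp => lam x * ‖v x‖ ^ 2) →
        (∫ x : Sp, lam x * ‖fderiv ℝ v x‖ ^ 2)
          ≤ C * ((∫ x : Sp, lam x * ‖curl3 v x‖ ^ 2) + ∫ x : Sp, lam x * ‖v x‖ ^ 2) := by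
  refine ⟨2 + 81 * C₀ ^ 2, by positivity, ?_⟩
  intro lam hlam hlam1 hlamg v hv hdiv hIg hIv
  have hlam0 : ∀ x, (0:ℝ) ≤ lam x := fun x => le_trans zero_le_one (hlam1 x)
  -- coordinate functions and matrix entries
  have hvc : ∀ j, ContDiff ℝ (⊤:ℕ∞) (fun y => v y j) := fun j => contDiff_coord hv j
  set A : Fin 3 → Fin 3 → Sp → ℝ := fun i j => pd i (fun y => v y j) with hA
  have hAcd : ∀ i j, ContDiff ℝ (⊤:ℕ∞) (A i j) := fun i j => contDiff_pd (hvc j) i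
  have hvdiff : Differentiable ℝ v := diffOf hv
  have hAb : ∀ i j x, |A i j x| ≤ ‖fderiv ℝ v x‖ := by
    intro i j x
    rw [hA]
    simp only
    rw [pd_coord hvdiff i j x]
    refine le_trans (coord_abs_le_norm _ j) ?_
    calc ‖fderiv ℝ v x (EuclideanSpace.single i 1)‖
        ≤ ‖fderiv ℝ v x‖ * ‖(EuclideanSpace.single i (1:ℝ) : Sp)‖ :=
          ContinuousLinearMap.le_opNorm _ _
      _ = ‖fderiv ℝ v x‖ := by rw [EuclideanSpace.norm_single]; simp
  have hvb : ∀ j x, |v x j| ≤ ‖v x‖ := fun j x => coord_abs_le_norm (v x) j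
  set Frob : Sp → ℝ := fun x => ∑ i, ∑ j, (A i j x)^2 with hFrob
  set S : Sp → ℝ := fun x => ∑ i, ∑ j, A i j x * A j i x with hS
  -- pointwise identities
  have hof : ∀ x, ‖fderiv ℝ v x‖ ^ 2 ≤ Frob x := by
    intro x
    refine le_trans (opNorm_sq_le_frob (fderiv ℝ v x)) (le_of_eq ?_)
    rw [hFrob]
    apply Finset.sum_congr rfl; intro i _
    apply Finset.sum_congr rfl; intro j _
    rw [hA]
    simp only
    rw [pd_coord hvdiff i j x]
  have hcurl : ∀ x, ‖curl3 v x‖^2 = Frob x - S x := by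
    intro x
    rw [norm_sq_eq]
    have hcc : ∀ k, curl3 v x k = ∑ i, ∑ j, lev i j k * A i j x := fun k => rfl
    calc ∑ k, (curl3 v x k)^2 = ∑ k, (∑ i, ∑ j, lev i j k * A i j x)^2 := by
          apply Finset.sum_congr rfl; intro k _; rw [hcc k]
      _ = (∑ i, ∑ j, (A i j x) ^ 2) - ∑ i, ∑ j, A i j x * A j i x :=
          lev_identity (fun i j => A i j x)
      _ = Frob x - S x := by rw [hFrob, hS]
  -- bounds on S and Frob
  have hSb : ∀ x, |S x| ≤ 9 * ‖fderiv ℝ v x‖^2 := by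
    intro x
    rw [hS]; simp only
    calc |∑ i, ∑ j, A i j x * A j i x| ≤ ∑ i, |∑ j, A i j x * A j i x| :=
          Finset.abs_sum_le_sum_abs _ _
      _ ≤ ∑ i : Fin 3, ∑ j : Fin 3, |A i j x * A j i x| :=
          Finset.sum_le_sum (fun i _ => Finset.abs_sum_le_sum_abs _ _)
      _ ≤ ∑ i : Fin 3, ∑ j : Fin 3, ‖fderiv ℝ v x‖^2 := by
          apply Finset.sum_le_sum; intro i _
          apply Finset.sum_le_sum; intro j _
          rw [abs_mul]
          calc |A i j x| * |A j i x| ≤ ‖fderiv ℝ v x‖ * ‖fderiv ℝ v x‖ :=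
                mul_le_mul (hAb i j x) (hAb j i x) (abs_nonneg _) (norm_nonneg _)
            _ = ‖fderiv ℝ v x‖^2 := (sq _).symm
      _ = 9 * ‖fderiv ℝ v x‖^2 := by
          simp [Finset.sum_const, Finset.card_univ]; ring
  have hFrob0 : ∀ x, 0 ≤ Frob x := by intro x; rw [hFrob]; positivity
  have hFrobb : ∀ x, Frob x ≤ 9 * ‖fderiv ℝ v x‖^2 := by
    intro x
    rw [hFrob]; simp only
    calc ∑ i : Fin 3, ∑ j : Fin 3, (A i j x)^2
        ≤ ∑ i : Fin 3, ∑ j : Fin 3, ‖fderiv ℝ v x‖^2 := by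
          apply Finset.sum_le_sum; intro i _
          apply Finset.sum_le_sum; intro j _
          calc (A i j x)^2 = |A i j x|^2 := (sq_abs _).symm
            _ ≤ ‖fderiv ℝ v x‖^2 := pow_le_pow_left₀ (abs_nonneg _) (hAb i j x) 2
      _ = 9 * ‖fderiv ℝ v x‖^2 := by
          simp [Finset.sum_const, Finset.card_univ]; ring
  -- continuity
  have hSc : Continuous S := by
    rw [hS]
    apply continuous_finset_sum; intro i _
    apply continuous_finset_sum; intro j _
    exact ((hAcd i j).continuous).mul ((hAcd j i).continuous)
  have hFrobc : Continuous Frob := by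
    rw [hFrob]
    apply continuous_finset_sum; intro i _
    apply continuous_finset_sum; intro j _
    exact ((hAcd i j).continuous).pow 2
  -- integrability of lam * S, lam * Frob, lam * |curl|^2
  have hIS : Integrable (fun x => lam x * S x) := by
    apply Integrable.mono' (hIg.const_mul 9) ((hlam.continuous.mul hSc).aestronglyMeasurable)
    filter_upwards with x
    rw [Real.norm_eq_abs, Pi.mul_apply, abs_mul, abs_of_nonneg (hlam0 x)]
    calc lam x * |S x| ≤ lam x * (9 * ‖fderiv ℝ v x‖^2) :=
          mul_le_mul_of_nonneg_left (hSb x) (hlam0 x)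
      _ = 9 * (lam x * ‖fderiv ℝ v x‖^2) := by ring
  have hIFrob : Integrable (fun x => lam x * Frob x) := by
    apply Integrable.mono' (hIg.const_mul 9) ((hlam.continuous.mul hFrobc).aestronglyMeasurable)
    filter_upwards with x
    rw [Real.norm_eq_abs, Pi.mul_apply, abs_mul, abs_of_nonneg (hlam0 x), abs_of_nonneg (hFrob0 x)]
    calc lam x * Frob x ≤ lam x * (9 * ‖fderiv ℝ v x‖^2) :=
          mul_le_mul_of_nonneg_left (hFrobb x) (hlam0 x)
      _ = 9 * (lam x * ‖fderiv ℝ v x‖^2) := by ring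
  have hIcurl : Integrable (fun x => lam x * ‖curl3 v x‖^2) := by
    apply (hIFrob.sub hIS).congr
    filter_upwards with x
    simp only [Pi.sub_apply]
    rw [hcurl x]; ring
  -- the vector field W = lam • (v·∇)v
  set Ff : Fin 3 → Sp → ℝ := fun i x => ∑ j, v x j * A j i x with hFf
  have hFcd : ∀ i, ContDiff ℝ (⊤:ℕ∞) (Ff i) := by
    intro i
    rw [hFf]
    exact ContDiff.sum (fun j _ => (hvc j).mul (hAcd j i))
  have hFb : ∀ i x, |Ff i x| ≤ 3 * (‖v x‖ * ‖fderiv ℝ v x‖) := by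
    intro i x
    rw [hFf]; simp only
    calc |∑ j, v x j * A j i x| ≤ ∑ j : Fin 3, |v x j * A j i x| :=
          Finset.abs_sum_le_sum_abs _ _
      _ ≤ ∑ j : Fin 3, ‖v x‖ * ‖fderiv ℝ v x‖ := by
          apply Finset.sum_le_sum; intro j _
          rw [abs_mul]
          exact mul_le_mul (hvb j x) (hAb j i x) (abs_nonneg _) (norm_nonneg _)
      _ = 3 * (‖v x‖ * ‖fderiv ℝ v x‖) := by
          simp [Finset.sum_const, Finset.card_univ]
  set W : Sp → Sp := fun x => ∑ i, (lam x * Ff i x) • EuclideanSpace.single i (1:ℝ) with hW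
  have hWcoord : ∀ x i, W x i = lam x * Ff i x := by
    intro x i
    rw [hW]
    exact sum_smul_single_apply _ i
  have hWcd : ContDiff ℝ (⊤:ℕ∞) W := by
    rw [hW]
    exact ContDiff.sum (fun i _ => (hlam.mul (hFcd i)).smul contDiff_const)
  have hWci : ∀ i, Integrable (fun x => W x i) := by
    intro i
    have heq : (fun x => W x i) = fun x => lam x * Ff i x := funext (fun x => hWcoord x i)
    rw [heq]
    apply Integrable.mono' ((hIv.add hIg).const_mul (3/2))
      ((hlam.continuous.mul (hFcd i).continuous).aestronglyMeasurable)
    filter_upwards with x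
    rw [Real.norm_eq_abs, Pi.mul_apply, abs_mul, abs_of_nonneg (hlam0 x)]
    have h1 := mul_le_mul_of_nonneg_left (hFb i x) (hlam0 x)
    have h2 : ‖v x‖ * ‖fderiv ℝ v x‖ * 2 ≤ ‖v x‖^2 + ‖fderiv ℝ v x‖^2 := by
      nlinarith [sq_nonneg (‖v x‖ - ‖fderiv ℝ v x‖)]
    have h3 := mul_le_mul_of_nonneg_left h2 (hlam0 x)
    calc lam x * |Ff i x| ≤ lam x * (3 * (‖v x‖ * ‖fderiv ℝ v x‖)) := h1
      _ = (3/2) * (lam x * (‖v x‖ * ‖fderiv ℝ v x‖ * 2)) := by ring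
      _ ≤ (3/2) * (lam x * (‖v x‖^2 + ‖fderiv ℝ v x‖^2)) := by linarith [h3]
      _ = 3/2 * (lam x * ‖v x‖^2 + lam x * ‖fderiv ℝ v x‖^2) := by ring
  -- the error term G
  set G : Sp → ℝ := fun x => ∑ i, pd i lam x * Ff i x with hG
  have hpdlamb : ∀ (i : Fin 3) (x : Sp), |pd i lam x| ≤ C₀ * lam x := by
    intro i x
    have : pd i lam x = fderiv ℝ lam x (EuclideanSpace.single i 1) := rfl
    rw [this, ← Real.norm_eq_abs]
    calc ‖fderiv ℝ lam x (EuclideanSpace.single i 1)‖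
        ≤ ‖fderiv ℝ lam x‖ * ‖(EuclideanSpace.single i (1:ℝ) : Sp)‖ :=
          ContinuousLinearMap.le_opNorm _ _
      _ = ‖fderiv ℝ lam x‖ := by rw [EuclideanSpace.norm_single]; simp
      _ ≤ C₀ * lam x := hlamg x
  have hGc : Continuous G := by
    rw [hG]
    apply continuous_finset_sum; intro i _
    exact ((contDiff_pd hlam i).continuous).mul (hFcd i).continuous
  have hGb : ∀ x, |G x| ≤ 9 * (C₀ * (lam x * (‖v x‖ * ‖fderiv ℝ v x‖))) := by
    intro x
    rw [hG]; simp only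
    calc |∑ i, pd i lam x * Ff i x| ≤ ∑ i : Fin 3, |pd i lam x * Ff i x| :=
          Finset.abs_sum_le_sum_abs _ _
      _ ≤ ∑ i : Fin 3, (C₀ * lam x) * (3 * (‖v x‖ * ‖fderiv ℝ v x‖)) := by
          apply Finset.sum_le_sum; intro i _
          rw [abs_mul]
          exact mul_le_mul (hpdlamb i x) (hFb i x) (abs_nonneg _)
            (mul_nonneg hC₀.le (hlam0 x))
      _ = 9 * (C₀ * (lam x * (‖v x‖ * ‖fderiv ℝ v x‖))) := by
          simp [Finset.sum_const, Finset.card_univ]; ring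
  have hGmaj : ∀ x, ‖G x‖ ≤ (1/2) * (lam x * ‖fderiv ℝ v x‖^2)
      + (81*C₀^2/2) * (lam x * ‖v x‖^2) := by
    intro x
    rw [Real.norm_eq_abs]
    have key : 9 * (C₀ * (‖v x‖ * ‖fderiv ℝ v x‖)) ≤
        (1/2) * ‖fderiv ℝ v x‖^2 + (81*C₀^2/2) * ‖v x‖^2 := by
      nlinarith [sq_nonneg (‖fderiv ℝ v x‖ - 9*C₀*‖v x‖)]
    have h2 := mul_le_mul_of_nonneg_left key (hlam0 x)
    have h1 := hGb x
    nlinarith [h1, h2]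
  have hIG : Integrable G := by
    apply Integrable.mono' ((hIg.const_mul (1/2)).add (hIv.const_mul (81*C₀^2/2)))
      hGc.aestronglyMeasurable
    filter_upwards with x
    exact hGmaj x
  -- divergence identity
  have hdivW : ∀ x, div3 W x = G x + lam x * S x := by
    intro x
    have hstep1 : ∀ i, pd i (fun y => W y i) x
        = pd i lam x * Ff i x + lam x * pd i (Ff i) x := by
      intro i
      rw [pd_congr (g := fun y => lam y * Ff i y) (fun y => hWcoord y i) i x]
      exact pd_mul ((diffOf hlam) x) ((diffOf (hFcd i)) x) i
    have hstep2 : ∀ i, pd i (Ff i) x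
        = ∑ j, (A i j x * A j i x + v x j * pd i (A j i) x) := by
      intro i
      have hps := pd_sum (g := fun j y => v y j * A j i y) Finset.univ
        (fun j _ => ((diffOf (hvc j)) x).mul ((diffOf (hAcd j i)) x)) i
      rw [hFf]
      simp only
      rw [hps]
      apply Finset.sum_congr rfl; intro j _
      have := pd_mul (f := fun y => v y j) (g := fun y => A j i y)
        ((diffOf (hvc j)) x) ((diffOf (hAcd j i)) x) i
      rw [this]
    have hstep3 : ∑ i : Fin 3, ∑ j : Fin 3, v x j * pd i (A j i) x = 0 := by
      have hcomm : ∀ i j : Fin 3, pd i (A j i) x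
          = pd j (pd i (fun y => v y i)) x := by
        intro i j
        have : A j i = pd j (fun y => v y i) := by rw [hA]
        rw [this]
        exact pd_pd_comm (hvc i) i j x
      calc ∑ i : Fin 3, ∑ j : Fin 3, v x j * pd i (A j i) x
          = ∑ j : Fin 3, ∑ i : Fin 3, v x j * pd j (pd i (fun y => v y i)) x := by
            rw [Finset.sum_comm]
            apply Finset.sum_congr rfl; intro j _
            apply Finset.sum_congr rfl; intro i _
            rw [hcomm i j]
        _ = ∑ j : Fin 3, v x j * ∑ i : Fin 3, pd j (pd i (fun y => v y i)) x := by
            apply Finset.sum_congr rfl; intro j _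
            rw [Finset.mul_sum]
        _ = ∑ j : Fin 3, v x j * pd j (div3 v) x := by
            apply Finset.sum_congr rfl; intro j _
            congr 1
            rw [← pd_sum (g := fun i y => pd i (fun z => v z i) y) Finset.univ
              (fun i _ => (diffOf (contDiff_pd (hvc i) i)) x) j]
            rfl
        _ = 0 := by
            apply Finset.sum_eq_zero; intro j _
            rw [pd_congr (g := fun _ => (0:ℝ)) hdiv j x, pd_const]
            ring
    calc div3 W x = ∑ i : Fin 3, pd i (fun y => W y i) x := rfl
      _ = ∑ i : Fin 3, (pd i lam x * Ff i x + lam x * pd i (Ff i) x) :=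
          Finset.sum_congr rfl (fun i _ => hstep1 i)
      _ = (∑ i : Fin 3, pd i lam x * Ff i x) + ∑ i : Fin 3, lam x * pd i (Ff i) x :=
          Finset.sum_add_distrib
      _ = G x + lam x * ∑ i : Fin 3, pd i (Ff i) x := by
          rw [hG, Finset.mul_sum]
      _ = G x + lam x * S x := by
          congr 1
          have : ∑ i : Fin 3, pd i (Ff i) x = S x := by
            calc ∑ i : Fin 3, pd i (Ff i) x
                = ∑ i : Fin 3, ∑ j : Fin 3, (A i j x * A j i x + v x j * pd i (A j i) x) :=
                  Finset.sum_congr rfl (fun i _ => hstep2 i)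
              _ = (∑ i : Fin 3, ∑ j : Fin 3, A i j x * A j i x)
                  + ∑ i : Fin 3, ∑ j : Fin 3, v x j * pd i (A j i) x := by
                  rw [← Finset.sum_add_distrib]
                  apply Finset.sum_congr rfl; intro i _
                  rw [← Finset.sum_add_distrib]
              _ = S x := by rw [hstep3, hS]; simp
          rw [this]
  -- the divergence theorem
  have hIdivW : Integrable (div3 W) := by
    apply (hIG.add hIS).congr
    filter_upwards with x
    exact (hdivW x).symm
  have hzero : ∫ x : Sp, div3 W x = 0 := integral_div3_eq_zero W hWcd hWci hIdivW
  have hsplit : ∫ x : Sp, div3 W x = (∫ x : Sp, G x) + ∫ x : Sp, lam x * S x := by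
    rw [show (fun x => div3 W x) = fun x => G x + lam x * S x from funext hdivW]
    exact integral_add hIG hIS
  have hISeq : ∫ x : Sp, lam x * S x = - ∫ x : Sp, G x := by
    rw [hsplit] at hzero; linarith
  -- bound on ∫ G
  have hGint : |∫ x : Sp, G x| ≤ (1/2) * (∫ x : Sp, lam x * ‖fderiv ℝ v x‖^2)
      + (81*C₀^2/2) * (∫ x : Sp, lam x * ‖v x‖^2) := by
    calc |∫ x : Sp, G x| ≤ ∫ x : Sp, ‖G x‖ := by
          rw [← Real.norm_eq_abs]
          exact norm_integral_le_integral_norm _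
      _ ≤ ∫ x : Sp, ((1/2) * (lam x * ‖fderiv ℝ v x‖^2)
          + (81*C₀^2/2) * (lam x * ‖v x‖^2)) := by
          apply integral_mono hIG.norm
            ((hIg.const_mul (1/2)).add (hIv.const_mul (81*C₀^2/2)))
          intro x
          exact hGmaj x
      _ = (1/2) * (∫ x : Sp, lam x * ‖fderiv ℝ v x‖^2)
          + (81*C₀^2/2) * (∫ x : Sp, lam x * ‖v x‖^2) := by
          rw [integral_add (hIg.const_mul (1/2)) (hIv.const_mul (81*C₀^2/2)),
            integral_const_mul, integral_const_mul]
  -- curl split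
  have hcsplit : ∫ x : Sp, lam x * Frob x
      = (∫ x : Sp, lam x * ‖curl3 v x‖^2) + ∫ x : Sp, lam x * S x := by
    rw [show (fun x => lam x * Frob x)
        = fun x => lam x * ‖curl3 v x‖^2 + lam x * S x from
      funext (fun x => by rw [hcurl x]; ring)]
    exact integral_add hIcurl hIS
  have hmono : ∫ x : Sp, lam x * ‖fderiv ℝ v x‖^2 ≤ ∫ x : Sp, lam x * Frob x := by
    apply integral_mono hIg hIFrob
    intro x
    exact mul_le_mul_of_nonneg_left (hof x) (hlam0 x)
  -- nonnegativity
  have hc0 : 0 ≤ ∫ x : Sp, lam x * ‖curl3 v x‖^2 :=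
    integral_nonneg (fun x => mul_nonneg (hlam0 x) (by positivity))
  have hv0 : 0 ≤ ∫ x : Sp, lam x * ‖v x‖^2 :=
    integral_nonneg (fun x => mul_nonneg (hlam0 x) (by positivity))
  -- final arithmetic
  have habs : ∫ x : Sp, lam x * S x ≤ (1/2) * (∫ x : Sp, lam x * ‖fderiv ℝ v x‖^2)
      + (81*C₀^2/2) * (∫ x : Sp, lam x * ‖v x‖^2) := by
    rw [hISeq]
    calc - ∫ x : Sp, G x ≤ |∫ x : Sp, G x| := neg_le_abs _
      _ ≤ _ := hGint
  nlinarith [hmono, hcsplit, habs, hc0, hv0, sq_nonneg C₀,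
    mul_nonneg (sq_nonneg C₀) hc0, mul_nonneg (sq_nonneg C₀) hv0]

end
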